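/- The alternating group A₄ on four letters (the subgroup of even permutations of a four-element type, e.g. alternatingGroup (Fin 4)) has Grossman's Property A: every class-preserving automorphism of A₄ is inner. -/

import Mathlib

/-! A₄ is generated by the 3-cycle `s = (0 1 2)` and the double transposition `t = (0 1)(2 3)`.
Composing a class-preserving automorphism `φ` with an inner one, we may assume `φ s = s`; then
`φ t` is still a conjugate of `t`, and the three conjugates of `t` (the involutions of the Klein
four-group) are permuted transitively by `⟨s⟩`, which centralizes `s`. A second inner automorphism
therefore fixes both generators, hence everything. -/

/-- A group `G` has Grossman's Property A if every class-preserving automorphism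
(i.e. one sending each element to a conjugate of itself) is inner. -/
def HasPropertyA (G : Type*) [Group G] : Prop :=
  ∀ φ : G ≃* G, (∀ g : G, IsConj g (φ g)) → ∃ h : G, ∀ g : G, φ g = h * g * h⁻¹

theorem hasPropertyA_of_closure_pair_eq_top {G : Type*} [Group G] (s t : G)
    (hgen : Subgroup.closure {s, t} = ⊤)
    (hconj : ∀ d : G, ∃ a : G, Commute a s ∧ d * t * d⁻¹ = a * t * a⁻¹) :
    HasPropertyA G := by
  intro φ hφ
  obtain ⟨c, hc⟩ := isConj_iff.mp (hφ s)
  obtain ⟨d, hd⟩ := isConj_iff.mp (hφ t)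
  obtain ⟨a, has, ha⟩ := hconj (c⁻¹ * d)
  have hφs : φ s = c * a * s * (c * a)⁻¹ := by
    rw [← hc, mul_assoc c a, has.eq]; group
  have hφt : φ t = c * a * t * (c * a)⁻¹ := by
    calc φ t = c * ((c⁻¹ * d) * t * (c⁻¹ * d)⁻¹) * c⁻¹ := by rw [← hd]; group
      _ = c * a * t * (c * a)⁻¹ := by rw [ha]; group
  have hφ_eq : φ.toMonoidHom = (MulAut.conj (c * a)).toMonoidHom := by
    refine MonoidHom.eq_of_eqOn_dense hgen ?_
    rintro x (rfl | rfl)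
    · exact hφs
    · exact hφt
  exact ⟨c * a, DFunLike.congr_fun hφ_eq⟩

namespace AlternatingGroupFour

local notation "A₄" => alternatingGroup (Fin 4)

def threeCycle : A₄ :=
  ⟨Equiv.swap 0 1 * Equiv.swap 1 2,
    Equiv.Perm.mem_alternatingGroup.mpr (by decide)⟩

def doubleTransposition : A₄ :=
  ⟨Equiv.swap 0 1 * Equiv.swap 2 3,
    Equiv.Perm.mem_alternatingGroup.mpr (by decide)⟩

theorem eq_pow_mul_pow_mul_pow (g : A₄) : ∃ i : Fin 3, ∃ j k : Fin 2,
    g = threeCycle ^ (i : ℕ) * doubleTransposition ^ (j : ℕ) *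
      (threeCycle * doubleTransposition * threeCycle⁻¹) ^ (k : ℕ) := by
  revert g; decide

theorem closure_threeCycle_doubleTransposition :
    Subgroup.closure {threeCycle, doubleTransposition} = ⊤ := by
  refine eq_top_iff.mpr fun g _ => ?_
  obtain ⟨i, j, k, rfl⟩ := eq_pow_mul_pow_mul_pow g
  have hs : threeCycle ∈ Subgroup.closure {threeCycle, doubleTransposition} :=
    Subgroup.subset_closure (by simp)
  have ht : doubleTransposition ∈ Subgroup.closure {threeCycle, doubleTransposition} :=
    Subgroup.subset_closure (by simp)
  exact mul_mem (mul_mem (pow_mem hs _) (pow_mem ht _))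
    (pow_mem (mul_mem (mul_mem hs ht) (inv_mem hs)) _)

theorem conj_doubleTransposition_eq_conj_pow (d : A₄) : ∃ i : Fin 3,
    d * doubleTransposition * d⁻¹ =
      threeCycle ^ (i : ℕ) * doubleTransposition * (threeCycle ^ (i : ℕ))⁻¹ := by
  revert d; decide

end AlternatingGroupFour

open AlternatingGroupFour in
theorem alternatingGroupFour_propertyA : HasPropertyA ↥(alternatingGroup (Fin 4)) :=
  hasPropertyA_of_closure_pair_eq_top threeCycle doubleTransposition
    closure_threeCycle_doubleTransposition fun d =>
      let ⟨i, hi⟩ := conj_doubleTransposition_eq_conj_pow d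
      ⟨_, (Commute.refl threeCycle).pow_left i, hi⟩
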